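/- Let x be a C¹ solution of the first-order singular Cucker–Smale system with strictly increasing natural velocities ν_1 < ν_2 < … < ν_N satisfying Σ_{i=1}^N ν_i = 0 and Σ_{i=1}^N x_i(0) = 0. Then mono-cluster flocking emerges unconditionally with exponential rate: there exist an equilibrium state X^∞ = (x_1^∞, …, x_N^∞) ∈ ℝ^N and a constant C > 0 such that for all i and all t ≥ 0, |x_i(t) − x_i^∞| ≤ C·exp(−κ (C'_{M1})^{−β} t), where C'_{M1} = max{ max_i x_i(0) − min_i x_i(0), ((1−β)(ν_N − ν_1)/κ)^{1/(1−β)} }. -/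

import Mathlib

/-!
While the extreme agents are more than `R = ((1-β)(ν_N - ν_1)/κ)^{1/(1-β)}` apart, their mutual
attraction `κ Ψ(x_N - x_1)` exceeds the spread `ν_N - ν_1` of the natural velocities, so the
diameter of the configuration never exceeds `C = C'_{M1}`. On differences bounded by `C`, `Ψ` has
slope at least `ψ(C) = C^{-β}`; hence the velocity field is dissipative with constant `κ ψ(C)` on
configurations with the same (conserved, zero) barycenter. Grönwall then shows that the solution
and its time shift `x(· + s)` approach each other like `exp(-κ ψ(C) t)`, uniformly in `s`, so
`x(t)` is Cauchy as `t → ∞` and converges at that rate to its limit `X^∞`.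
-/

open Real Filter Set

/-- The interaction function `Ψ(x) = sign(x)·|x|^{1−β}/(1−β)`. -/
noncomputable def psiCS (β y : ℝ) : ℝ := Real.sign y * |y| ^ (1 - β) / (1 - β)

/-- A C¹ solution on `[0,∞)` of the first-order singular Cucker–Smale system:
`x_i'(t) = ν_i + (κ/N) Σ_k Ψ(x_k(t) − x_i(t))`. -/
def IsCSSol (N : ℕ) (β κ : ℝ) (ν : Fin N → ℝ) (x : ℝ → Fin N → ℝ) : Prop :=
  (∀ i, ContDiffOn ℝ 1 (fun t => x t i) (Set.Ici 0)) ∧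
  ∀ i, ∀ t ≥ (0:ℝ), HasDerivWithinAt (fun s => x s i)
    (ν i + (κ / (N:ℝ)) * ∑ k, psiCS β (x t k - x t i)) (Set.Ici 0) t

/-- The diameter of a configuration `y : Fin N → ℝ`. -/
noncomputable def diam {N : ℕ} (y : Fin N → ℝ) : ℝ := ⨆ i, ⨆ j, (y i - y j)

open Topology

section FiniteSums

variable {ι : Type*} [Fintype ι]

lemma two_mul_sum_sum_mul_of_antisymm (e : ι → ℝ) {q : ι → ι → ℝ}
    (hq : ∀ i k, q k i = -q i k) :
    2 * ∑ i, ∑ k, e i * q i k = ∑ i, ∑ k, (e i - e k) * q i k := by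
  have hswap : ∑ i, ∑ k, e k * q i k = -∑ i, ∑ k, e i * q i k := by
    rw [Finset.sum_comm, ← Finset.sum_neg_distrib]
    refine Finset.sum_congr rfl fun i _ => ?_
    rw [← Finset.sum_neg_distrib]
    exact Finset.sum_congr rfl fun k _ => by rw [hq, mul_neg]
  simp only [sub_mul, Finset.sum_sub_distrib, hswap]
  ring

lemma sum_sum_sub_sq (e : ι → ℝ) :
    ∑ i, ∑ k, (e i - e k) ^ 2 = 2 * Fintype.card ι * ∑ i, e i ^ 2 - 2 * (∑ i, e i) ^ 2 := by
  simp only [sub_sq, Finset.sum_add_distrib, Finset.sum_sub_distrib, Finset.sum_const,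
    Finset.card_univ, nsmul_eq_mul, ← Finset.mul_sum, ← Finset.sum_mul, mul_assoc]
  ring

lemma abs_le_of_sum_eq_zero {y : ι → ℝ} {C : ℝ} (hsum : ∑ i, y i = 0)
    (hC : ∀ i j, y i - y j ≤ C) (i : ι) : |y i| ≤ C := by
  have hne : (Finset.univ : Finset ι).Nonempty := ⟨i, Finset.mem_univ i⟩
  obtain ⟨j, -, hj⟩ := Finset.exists_le_of_sum_le hne (f := y) (g := fun _ => 0) (by simp [hsum])
  obtain ⟨k, -, hk⟩ := Finset.exists_le_of_sum_le hne (f := fun _ => 0) (g := y) (by simp [hsum])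
  exact abs_le.2 ⟨by linarith [hC k i, hk], by linarith [hC i j, hj]⟩

end FiniteSums

section Analysis

/-- At the first time `τ` some `f p` reaches `c`, it was below `c` just before, forcing
`f' p τ ≥ 0`. -/
lemma forall_lt_of_hasDerivAt_neg_at_level {ι : Type*} [Finite ι] {f f' : ι → ℝ → ℝ} {c : ℝ}
    (hcont : ∀ p, ContinuousOn (f p) (Ici 0))
    (hderiv : ∀ p, ∀ t > 0, HasDerivAt (f p) (f' p t) t)
    (h0 : ∀ p, f p 0 < c)
    (hlevel : ∀ p, ∀ t > 0, (∀ q, f q t ≤ c) → f p t = c → f' p t < 0) :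
    ∀ p, ∀ t ≥ 0, f p t < c := by
  by_contra! h
  obtain ⟨p₀, t₀, ht₀, hc₀⟩ := h
  set S := ⋃ p, Ici 0 ∩ f p ⁻¹' Ici c
  have hS : IsClosed S := isClosed_iUnion_of_finite fun p =>
    (hcont p).preimage_isClosed_of_isClosed isClosed_Ici isClosed_Ici
  have hSbdd : BddBelow S := ⟨0, fun t ht => by
    obtain ⟨p, ht, -⟩ := mem_iUnion.1 ht
    exact ht⟩
  set τ := sInf S
  obtain ⟨p, hτ0, hpτ⟩ := mem_iUnion.1 (hS.csInf_mem ⟨t₀, mem_iUnion.2 ⟨p₀, ht₀, hc₀⟩⟩ hSbdd)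
  replace hpτ : c ≤ f p τ := hpτ
  have hτ : 0 < τ := lt_of_le_of_ne hτ0 fun h => (h0 p).not_ge (h ▸ hpτ)
  have hbefore : ∀ q, ∀ s ∈ Ioo 0 τ, f q s < c := fun q s hs => by
    by_contra! hqs
    exact (csInf_le hSbdd (mem_iUnion.2 ⟨q, hs.1.le, hqs⟩)).not_gt hs.2
  have hleft : ∀ᶠ s in 𝓝[<] τ, s ∈ Ioo 0 τ := Ioo_mem_nhdsLT hτ
  have hle : ∀ q, f q τ ≤ c := fun q =>
    le_of_tendsto ((hderiv q τ hτ).continuousAt.tendsto.mono_left nhdsWithin_le_nhds)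
      (hleft.mono fun s hs => (hbefore q s hs).le)
  have hslope : ∀ᶠ s in 𝓝[<] τ, slope (f p) τ s < 0 :=
    (hderiv p τ hτ).hasDerivWithinAt.limsup_slope_le' (lt_irrefl τ)
      (hlevel p τ hτ hle (le_antisymm (hle p) hpτ))
  obtain ⟨s, hs, hsτ⟩ := (hleft.and hslope).exists
  rw [slope_def_field] at hsτ
  exact hsτ.not_gt <| div_pos_of_neg_of_neg (sub_neg.2 ((hbefore p s hs).trans_le hpτ))
    (sub_neg.2 hs.2)

lemma le_mul_exp_of_hasDerivWithinAt_le {f f' : ℝ → ℝ} {K : ℝ}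
    (hf : ∀ t ≥ 0, HasDerivWithinAt f (f' t) (Ici 0) t) (hbound : ∀ t ≥ 0, f' t ≤ K * f t) :
    ∀ t ≥ 0, f t ≤ f 0 * exp (K * t) := by
  intro t ht
  have hcont : ContinuousOn f (Icc 0 t) := fun s hs =>
    ((hf s hs.1).continuousWithinAt).mono Icc_subset_Ici_self
  have h := le_gronwallBound_of_liminf_deriv_right_le (ε := 0) hcont
    (fun s hs r hr => ((hf s hs.1).mono (Ici_subset_Ici.2 hs.1)).liminf_right_slope_le hr)
    le_rfl (fun s hs => by simpa using hbound s hs.1) t ⟨ht, le_rfl⟩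
  rwa [sub_zero, gronwallBound_ε0] at h

lemma exists_forall_dist_le_of_dist_add_le {E : Type*} [PseudoMetricSpace E] [CompleteSpace E]
    {f : ℝ → E} {g : ℝ → ℝ} (hg : Tendsto g atTop (𝓝 0))
    (hf : ∀ t ≥ 0, ∀ s ≥ 0, dist (f (t + s)) (f t) ≤ g t) :
    ∃ l, ∀ t ≥ 0, dist (f t) l ≤ g t := by
  have hcauchy : CauchySeq f := Metric.cauchySeq_iff'.2 fun ε hε => by
    obtain ⟨T, hT⟩ := eventually_atTop.1 (hg.eventually (gt_mem_nhds hε))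
    refine ⟨max T 0, fun t ht => ?_⟩
    have h := hf (max T 0) (le_max_right _ _) (t - max T 0) (sub_nonneg.2 ht)
    rw [add_sub_cancel] at h
    exact h.trans_lt (hT _ (le_max_left _ _))
  obtain ⟨l, hl⟩ := cauchySeq_tendsto_of_complete hcauchy
  refine ⟨l, fun t ht => ?_⟩
  have hlim : Tendsto (fun s => dist (f (t + s)) (f t)) atTop (𝓝 (dist l (f t))) :=
    (hl.comp (tendsto_atTop_add_const_left _ t tendsto_id)).dist tendsto_const_nhds
  rw [dist_comm]
  exact le_of_tendsto hlim ((eventually_ge_atTop 0).mono fun s hs => hf t ht s hs)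

end Analysis

lemma sub_le_diam {N : ℕ} (y : Fin N → ℝ) (i j : Fin N) : y i - y j ≤ diam y :=
  (le_ciSup (Set.finite_range _).bddAbove j).trans
    (le_ciSup (Set.finite_range fun i => ⨆ j, y i - y j).bddAbove i)

section Psi

variable {β : ℝ}

lemma psiCS_zero : psiCS β 0 = 0 := by simp [psiCS]

lemma psiCS_neg (y : ℝ) : psiCS β (-y) = -psiCS β y := by
  simp [psiCS, Real.sign_neg, neg_div]

lemma psiCS_of_nonneg (hβ1 : β < 1) {y : ℝ} (hy : 0 ≤ y) :
    psiCS β y = y ^ (1 - β) / (1 - β) := by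
  rcases hy.eq_or_lt with rfl | hy
  · simp [psiCS_zero, Real.zero_rpow (sub_ne_zero.2 hβ1.ne')]
  · rw [psiCS, Real.sign_of_pos hy, abs_of_pos hy, one_mul]

lemma continuousOn_psiCS (hβ1 : β < 1) : ContinuousOn (psiCS β) (Ici 0) :=
  ((Real.continuous_rpow_const (by linarith)).continuousOn.div_const _).congr
    fun _ hy => psiCS_of_nonneg hβ1 hy

lemma hasDerivAt_psiCS (hβ1 : β < 1) {y : ℝ} (hy : 0 < y) :
    HasDerivAt (psiCS β) (y ^ (-β)) y := by
  have h := (Real.hasDerivAt_rpow_const (p := 1 - β) (Or.inl hy.ne')).div_const (1 - β)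
  refine (h.congr_of_eventuallyEq ?_).congr_deriv ?_
  · filter_upwards [Ioi_mem_nhds hy] with z hz using psiCS_of_nonneg hβ1 (le_of_lt hz)
  · rw [show 1 - β - 1 = -β by ring, mul_div_cancel_left₀ _ (by linarith)]

lemma strictMonoOn_psiCS (hβ1 : β < 1) : StrictMonoOn (psiCS β) (Ici 0) := by
  intro a (ha : 0 ≤ a) b (hb : 0 ≤ b) hab
  rw [psiCS_of_nonneg hβ1 ha, psiCS_of_nonneg hβ1 hb]
  gcongr

lemma psiCS_add_le (hβ0 : 0 ≤ β) (hβ1 : β < 1) {u v : ℝ} (hu : 0 ≤ u) (hv : 0 ≤ v) :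
    psiCS β (u + v) ≤ psiCS β u + psiCS β v := by
  rw [psiCS_of_nonneg hβ1 hu, psiCS_of_nonneg hβ1 hv, psiCS_of_nonneg hβ1 (add_nonneg hu hv),
    ← add_div]
  gcongr
  exact Real.rpow_add_le_add_rpow hu hv (by linarith) (by linarith)

lemma psiCS_rpow_one_div (hβ1 : β < 1) {a : ℝ} (ha : 0 ≤ a) :
    psiCS β (((1 - β) * a) ^ (1 / (1 - β))) = a := by
  have h1β : 0 < 1 - β := by linarith
  rw [psiCS_of_nonneg hβ1 (by positivity), ← Real.rpow_mul (by positivity),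
    one_div_mul_cancel h1β.ne', Real.rpow_one, mul_div_cancel_left₀ _ h1β.ne']

lemma monotoneOn_psiCS_sub_mul_of_nonneg (hβ0 : 0 ≤ β) (hβ1 : β < 1) (C : ℝ) :
    MonotoneOn (fun y => psiCS β y - C ^ (-β) * y) (Icc 0 C) := by
  have hderiv : ∀ y ∈ Ioo 0 C,
      HasDerivAt (fun y => psiCS β y - C ^ (-β) * y) (y ^ (-β) - C ^ (-β)) y := fun y hy => by
    simpa using (hasDerivAt_psiCS hβ1 hy.1).fun_sub ((hasDerivAt_id' y).const_mul (C ^ (-β)))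
  refine monotoneOn_of_deriv_nonneg (convex_Icc 0 C)
    (((continuousOn_psiCS hβ1).mono Icc_subset_Ici_self).sub (by fun_prop)) ?_ ?_ <;>
    rw [interior_Icc]
  · exact fun y hy => (hderiv y hy).differentiableAt.differentiableWithinAt
  · intro y hy
    rw [(hderiv y hy).deriv, sub_nonneg]
    exact Real.rpow_le_rpow_of_nonpos hy.1 hy.2.le (by linarith)

lemma monotoneOn_psiCS_sub_mul (hβ0 : 0 ≤ β) (hβ1 : β < 1) {C : ℝ} (hC : 0 ≤ C) :
    MonotoneOn (fun y => psiCS β y - C ^ (-β) * y) (Icc (-C) C) := by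
  have hpos := monotoneOn_psiCS_sub_mul_of_nonneg hβ0 hβ1 C
  have hneg : MonotoneOn (fun y => psiCS β y - C ^ (-β) * y) (Icc (-C) 0) := by
    intro a ha b hb hab
    have h := hpos ⟨neg_nonneg.2 hb.2, neg_le.1 hb.1⟩ ⟨neg_nonneg.2 ha.2, neg_le.1 ha.1⟩
      (neg_le_neg hab)
    simp only [psiCS_neg] at h
    linarith
  rw [← Icc_union_Icc_eq_Icc (neg_nonpos.2 hC) hC]
  exact hneg.union_right hpos (isGreatest_Icc (neg_nonpos.2 hC)) (isLeast_Icc hC)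

lemma rpow_neg_mul_sq_le_psiCS_sub_mul (hβ0 : 0 ≤ β) (hβ1 : β < 1) {C a b : ℝ}
    (ha : |a| ≤ C) (hb : |b| ≤ C) :
    C ^ (-β) * (a - b) ^ 2 ≤ (psiCS β a - psiCS β b) * (a - b) := by
  have hmono := monotoneOn_psiCS_sub_mul hβ0 hβ1 ((abs_nonneg a).trans ha)
  have ha' := abs_le.1 ha
  have hb' := abs_le.1 hb
  rcases le_total b a with hba | hab
  · have := hmono ⟨hb'.1, hb'.2⟩ ⟨ha'.1, ha'.2⟩ hba
    nlinarith
  · have := hmono ⟨ha'.1, ha'.2⟩ ⟨hb'.1, hb'.2⟩ hab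
    nlinarith

lemma sum_sum_psiCS_sub {ι : Type*} [Fintype ι] (y : ι → ℝ) :
    ∑ i, ∑ k, psiCS β (y k - y i) = 0 := by
  have h : ∑ i, ∑ k, psiCS β (y k - y i) = -∑ i, ∑ k, psiCS β (y k - y i) := by
    conv_rhs => rw [Finset.sum_comm]
    simp only [← Finset.sum_neg_distrib, ← psiCS_neg, neg_sub]
  linarith

end Psi

noncomputable def csVelocity (N : ℕ) (β κ : ℝ) (ν y : Fin N → ℝ) (i : Fin N) : ℝ :=
  ν i + (κ / N) * ∑ k, psiCS β (y k - y i)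

section Velocity

variable {N : ℕ} {β κ : ℝ} {ν : Fin N → ℝ}

lemma sum_csVelocity (y : Fin N → ℝ) : ∑ i, csVelocity N β κ ν y i = ∑ i, ν i := by
  simp only [csVelocity, Finset.sum_add_distrib, ← Finset.mul_sum, sum_sum_psiCS_sub, mul_zero,
    add_zero]

/-- Every other agent `k` lies between `j` and `i`, and `Ψ` is subadditive on `[0, ∞)`. -/
lemma csVelocity_sub_le (hβ0 : 0 ≤ β) (hβ1 : β < 1) (hκ : 0 ≤ κ) {y : Fin N → ℝ} {i j : Fin N}
    (hi : ∀ k, y k ≤ y i) (hj : ∀ k, y j ≤ y k) :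
    csVelocity N β κ ν y i - csVelocity N β κ ν y j ≤ ν i - ν j - κ * psiCS β (y i - y j) := by
  have hN : (N : ℝ) ≠ 0 := Nat.cast_ne_zero.2 (Fin.pos i).ne'
  have hterm : ∀ k, psiCS β (y k - y i) - psiCS β (y k - y j) ≤ -psiCS β (y i - y j) := by
    intro k
    have h := psiCS_add_le hβ0 hβ1 (sub_nonneg.2 (hi k)) (sub_nonneg.2 (hj k))
    rw [sub_add_sub_cancel] at h
    rw [← neg_sub (y i), psiCS_neg]
    linarith
  have hsum : ∑ k, (psiCS β (y k - y i) - psiCS β (y k - y j)) ≤ N * -psiCS β (y i - y j) := by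
    simpa using Finset.sum_le_sum fun k (_ : k ∈ Finset.univ) => hterm k
  have hscaled := mul_le_mul_of_nonneg_left hsum (div_nonneg hκ (Nat.cast_nonneg N))
  rw [Finset.sum_sub_distrib, ← mul_assoc, div_mul_cancel₀ κ hN] at hscaled
  simp only [csVelocity]
  linarith

/-- Symmetrized over pairs `(i, k)`, each pair contributes at most `-C^{-β} (e_i - e_k)²`, where
`e = a - b`; equal barycenters make `Σ_{i,k} (e_i - e_k)² = 2N Σ_i e_i²`. -/
lemma sum_mul_csVelocity_sub_le (hβ0 : 0 ≤ β) (hβ1 : β < 1) (hκ : 0 ≤ κ) {C : ℝ}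
    {a b : Fin N → ℝ} (hsum : ∑ i, a i = ∑ i, b i)
    (ha : ∀ i k, a i - a k ≤ C) (hb : ∀ i k, b i - b k ≤ C) :
    ∑ i, (a i - b i) * (csVelocity N β κ ν a i - csVelocity N β κ ν b i) ≤
      -(κ * C ^ (-β)) * ∑ i, (a i - b i) ^ 2 := by
  rcases N.eq_zero_or_pos with rfl | hN
  · simp
  set e := fun i => a i - b i
  set q := fun i k => psiCS β (a k - a i) - psiCS β (b k - b i)
  have hq : ∀ i k, q k i = -q i k := fun i k => by
    simp only [q, ← neg_sub (a k), ← neg_sub (b k), psiCS_neg]; ring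
  have hterm : ∀ i k, (e i - e k) * q i k ≤ -C ^ (-β) * (e i - e k) ^ 2 := fun i k => by
    have h := rpow_neg_mul_sq_le_psiCS_sub_mul hβ0 hβ1
      (abs_sub_le_iff.2 ⟨ha k i, ha i k⟩) (abs_sub_le_iff.2 ⟨hb k i, hb i k⟩)
    have he : a k - a i - (b k - b i) = -(e i - e k) := by simp only [e]; ring
    rw [he] at h
    simp only [q]
    nlinarith
  have he0 : ∑ i, e i = 0 := by simp only [e, Finset.sum_sub_distrib, hsum, sub_self]
  have hpairs : 2 * ∑ i, ∑ k, e i * q i k ≤ -C ^ (-β) * (2 * N * ∑ i, e i ^ 2) := by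
    rw [two_mul_sum_sum_mul_of_antisymm e hq]
    calc ∑ i, ∑ k, (e i - e k) * q i k ≤ ∑ i, ∑ k, -C ^ (-β) * (e i - e k) ^ 2 :=
          Finset.sum_le_sum fun i _ => Finset.sum_le_sum fun k _ => hterm i k
      _ = -C ^ (-β) * (2 * N * ∑ i, e i ^ 2) := by
          simp only [← Finset.mul_sum]
          rw [sum_sum_sub_sq, he0, Fintype.card_fin]
          ring
  have hlhs : ∑ i, (a i - b i) * (csVelocity N β κ ν a i - csVelocity N β κ ν b i) =
      κ / N * ∑ i, ∑ k, e i * q i k := by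
    rw [Finset.mul_sum]
    refine Finset.sum_congr rfl fun i _ => ?_
    simp only [csVelocity, e, q, ← Finset.mul_sum, Finset.sum_sub_distrib]
    ring
  have hN' : (N : ℝ) ≠ 0 := Nat.cast_ne_zero.2 hN.ne'
  have hscaled := mul_le_mul_of_nonneg_left hpairs (div_nonneg hκ (Nat.cast_nonneg N))
  rw [hlhs]
  field_simp at hscaled ⊢
  linarith

end Velocity

namespace IsCSSol

variable {N : ℕ} {β κ : ℝ} {ν : Fin N → ℝ} {x y : ℝ → Fin N → ℝ}

lemma hasDerivWithinAt (hx : IsCSSol N β κ ν x) (i : Fin N) {t : ℝ} (ht : 0 ≤ t) :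
    HasDerivWithinAt (fun s => x s i) (csVelocity N β κ ν (x t) i) (Ici 0) t :=
  hx.2 i t ht

lemma continuousOn (hx : IsCSSol N β κ ν x) (i : Fin N) :
    ContinuousOn (fun t => x t i) (Ici 0) :=
  (hx.1 i).continuousOn

lemma comp_add (hx : IsCSSol N β κ ν x) {s : ℝ} (hs : 0 ≤ s) :
    IsCSSol N β κ ν (fun t => x (t + s)) := by
  have hmaps : MapsTo (fun t : ℝ => t + s) (Ici 0) (Ici 0) := fun t (ht : 0 ≤ t) =>
    show 0 ≤ t + s by linarith
  refine ⟨fun i => (hx.1 i).comp (contDiffOn_id.add contDiffOn_const) hmaps, fun i t ht => ?_⟩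
  have h := (hx.hasDerivWithinAt i (add_nonneg ht hs)).comp t
    ((hasDerivAt_id t).add_const s).hasDerivWithinAt hmaps
  rw [mul_one] at h
  exact h

lemma sum_eq (hx : IsCSSol N β κ ν x) (hν : ∑ i, ν i = 0) {t : ℝ} (ht : 0 ≤ t) :
    ∑ i, x t i = ∑ i, x 0 i := by
  refine constant_of_has_deriv_right_zero (f := fun t => ∑ i, x t i)
    ((continuousOn_finsetSum _ fun i _ => hx.continuousOn i).mono Icc_subset_Ici_self)
    (fun s hs => ?_) t ⟨ht, le_rfl⟩
  have h := HasDerivWithinAt.fun_sum fun i (_ : i ∈ Finset.univ) => hx.hasDerivWithinAt i hs.1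
  rw [sum_csVelocity, hν] at h
  exact h.mono (Ici_subset_Ici.2 hs.1)

/-- `R = ((1 - β) Δ / κ)^{1/(1-β)}` solves `κ Ψ(R) = Δ`, so at any level above `R` the extreme
agents approach each other. -/
lemma sub_le (hx : IsCSSol N β κ ν x) (hβ0 : 0 ≤ β) (hβ1 : β < 1) (hκ : 0 < κ) {Δ C : ℝ}
    (hνΔ : ∀ i j, ν i - ν j ≤ Δ) (hR : ((1 - β) * Δ / κ) ^ (1 / (1 - β)) ≤ C)
    (h0 : ∀ i j, x 0 i - x 0 j ≤ C) {t : ℝ} (ht : 0 ≤ t) (i j : Fin N) :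
    x t i - x t j ≤ C := by
  refine le_of_forall_pos_lt_add fun ε hε => ?_
  refine forall_lt_of_hasDerivAt_neg_at_level (c := C + ε) (f := fun p t => x t p.1 - x t p.2)
    (f' := fun p t => csVelocity N β κ ν (x t) p.1 - csVelocity N β κ ν (x t) p.2)
    (fun p => (hx.continuousOn p.1).sub (hx.continuousOn p.2))
    (fun p t ht => ((hx.hasDerivWithinAt p.1 ht.le).sub
      (hx.hasDerivWithinAt p.2 ht.le)).hasDerivAt (Ici_mem_nhds ht))
    (fun p => by linarith [h0 p.1 p.2]) ?_ (i, j) t ht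
  rintro ⟨i, j⟩ t - hle heq
  dsimp only at hle heq ⊢
  have hΔ : 0 ≤ Δ := by simpa using hνΔ i i
  have hψ : Δ < κ * psiCS β (C + ε) := by
    have hR0 : 0 ≤ ((1 - β) * Δ / κ) ^ (1 / (1 - β)) := by positivity
    have hRc := hR.trans_lt (lt_add_of_pos_right C hε)
    have h := strictMonoOn_psiCS hβ1 (mem_Ici.2 hR0) (mem_Ici.2 (hR0.trans hRc.le)) hRc
    rwa [mul_div_assoc, psiCS_rpow_one_div hβ1 (div_nonneg hΔ hκ.le), div_lt_iff₀' hκ] at h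
  have h := csVelocity_sub_le (ν := ν) (y := x t) (i := i) (j := j) hβ0 hβ1 hκ.le
    (fun k => by linarith [hle (k, j)]) (fun k => by linarith [hle (i, k)])
  rw [heq] at h
  linarith [hνΔ i j]

lemma sum_sq_sub_le (hx : IsCSSol N β κ ν x) (hy : IsCSSol N β κ ν y) (hβ0 : 0 ≤ β)
    (hβ1 : β < 1) (hκ : 0 ≤ κ) {C : ℝ} (hsum : ∀ t ≥ 0, ∑ i, y t i = ∑ i, x t i)
    (hxC : ∀ t ≥ 0, ∀ i j, x t i - x t j ≤ C) (hyC : ∀ t ≥ 0, ∀ i j, y t i - y t j ≤ C)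
    {t : ℝ} (ht : 0 ≤ t) :
    ∑ i, (y t i - x t i) ^ 2 ≤ (∑ i, (y 0 i - x 0 i) ^ 2) * exp (-(2 * (κ * C ^ (-β))) * t) := by
  refine le_mul_exp_of_hasDerivWithinAt_le (f := fun t => ∑ i, (y t i - x t i) ^ 2)
    (f' := fun t => ∑ i, 2 * ((y t i - x t i) *
      (csVelocity N β κ ν (y t) i - csVelocity N β κ ν (x t) i)))
    (fun t ht => HasDerivWithinAt.fun_sum fun i _ => ?_) (fun t ht => ?_) t ht
  · exact (((hy.hasDerivWithinAt i ht).fun_sub (hx.hasDerivWithinAt i ht)).fun_pow 2).congr_deriv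
      (by push_cast; ring)
  · have h := sum_mul_csVelocity_sub_le (ν := ν) hβ0 hβ1 hκ (hsum t ht) (hyC t ht) (hxC t ht)
    rw [← Finset.mul_sum]
    linarith

lemma abs_add_sub_le (hx : IsCSSol N β κ ν x) (hβ0 : 0 ≤ β) (hβ1 : β < 1) (hκ : 0 ≤ κ) {C : ℝ}
    (hC : ∀ t ≥ 0, ∀ i j, x t i - x t j ≤ C) (hsum : ∀ t ≥ 0, ∑ i, x t i = 0) {t s : ℝ}
    (ht : 0 ≤ t) (hs : 0 ≤ s) (i : Fin N) :
    |x (t + s) i - x t i| ≤ 2 * C * √N * exp (-(κ * C ^ (-β)) * t) := by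
  have hC0 : 0 ≤ C := by simpa using hC 0 le_rfl i i
  have hcontr := hx.sum_sq_sub_le (hx.comp_add hs) hβ0 hβ1 hκ
    (fun t ht => (hsum _ (by linarith)).trans (hsum t ht).symm) hC
    (fun t ht => hC _ (by linarith)) ht
  have hbound : ∀ τ ≥ 0, ∀ j, |x τ j| ≤ C := fun τ hτ =>
    abs_le_of_sum_eq_zero (hsum τ hτ) (hC τ hτ)
  have hinit : ∑ j, (x (0 + s) j - x 0 j) ^ 2 ≤ N * (2 * C) ^ 2 := by
    calc ∑ j, (x (0 + s) j - x 0 j) ^ 2 ≤ ∑ _j : Fin N, (2 * C) ^ 2 :=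
          Finset.sum_le_sum fun j _ => by
            have h1 := abs_le.1 (hbound (0 + s) (by linarith) j)
            have h2 := abs_le.1 (hbound 0 le_rfl j)
            exact sq_le_sq' (by linarith) (by linarith)
      _ = N * (2 * C) ^ 2 := by simp
  refine abs_le_of_sq_le_sq ?_ (by positivity)
  calc (x (t + s) i - x t i) ^ 2 ≤ ∑ j, (x (t + s) j - x t j) ^ 2 :=
        Finset.single_le_sum (f := fun j => (x (t + s) j - x t j) ^ 2) (fun j _ => sq_nonneg _)
          (Finset.mem_univ i)
    _ ≤ N * (2 * C) ^ 2 * exp (-(2 * (κ * C ^ (-β))) * t) := hcontr.trans (by gcongr)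
    _ = (2 * C * √N * exp (-(κ * C ^ (-β)) * t)) ^ 2 := by
        have he : exp (-(2 * (κ * C ^ (-β))) * t) = exp (-(κ * C ^ (-β)) * t) ^ 2 := by
          rw [← Real.exp_nat_mul]
          ring_nf
        simp only [he, mul_pow, Real.sq_sqrt (Nat.cast_nonneg N)]
        ring

end IsCSSol

/-- Unconditional mono-cluster flocking with exponential rate `κ ψ(C'_{M1})`. -/
theorem stmt7 (N : ℕ) (hN : 2 ≤ N) (β κ : ℝ) (hβ0 : 0 < β) (hβ1 : β < 1)
    (hκ : 0 < κ) (ν : Fin N → ℝ) (x : ℝ → Fin N → ℝ) (hx : IsCSSol N β κ ν x)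
    (hν : StrictMono ν) (hνsum : ∑ i, ν i = 0) (hxsum : ∑ i, x 0 i = 0) :
    ∃ Xinf : Fin N → ℝ, ∃ C > (0:ℝ), ∀ i : Fin N, ∀ t ≥ (0:ℝ),
      |x t i - Xinf i| ≤ C * Real.exp (-(κ *
        (max (diam (x 0))
          (((1 - β) * (ν ⟨N - 1, by omega⟩ - ν ⟨0, by omega⟩) / κ) ^ (1 / (1 - β)))) ^ (-β)) * t) := by
  set Δ := ν ⟨N - 1, by omega⟩ - ν ⟨0, by omega⟩
  set C := max (diam (x 0)) (((1 - β) * Δ / κ) ^ (1 / (1 - β)))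
  have hΔ : 0 < Δ := sub_pos.2 (hν (Fin.mk_lt_mk.2 (by omega)))
  have hνΔ : ∀ i j, ν i - ν j ≤ Δ := fun i j =>
    sub_le_sub (hν.monotone (Fin.le_iff_val_le_val.2 (Nat.le_sub_one_of_lt i.isLt)))
      (hν.monotone (Fin.le_iff_val_le_val.2 (Nat.zero_le _)))
  have hC : 0 < C := lt_max_of_lt_right (by positivity)
  have hdiam : ∀ t ≥ 0, ∀ i j, x t i - x t j ≤ C := fun t ht =>
    hx.sub_le hβ0.le hβ1 hκ hνΔ (le_max_right _ _)
      (fun i j => (sub_le_diam _ i j).trans (le_max_left _ _)) ht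
  have hsum : ∀ t ≥ 0, ∑ i, x t i = 0 := fun t ht => (hx.sum_eq hνsum ht).trans hxsum
  have hrate : Tendsto (fun t => 2 * C * √N * exp (-(κ * C ^ (-β)) * t)) atTop (𝓝 0) := by
    have hμ : 0 < κ * C ^ (-β) := mul_pos hκ (Real.rpow_pos_of_pos hC _)
    simpa [neg_mul] using (Real.tendsto_exp_neg_atTop_nhds_zero.comp
      (tendsto_id.const_mul_atTop hμ)).const_mul (2 * C * √N)
  choose Xinf hXinf using fun i => exists_forall_dist_le_of_dist_add_le (f := fun t => x t i)
    hrate fun t ht s hs => hx.abs_add_sub_le hβ0.le hβ1 hκ.le hdiam hsum ht hs i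
  exact ⟨Xinf, 2 * C * √N, by positivity, hXinf⟩
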